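/- The observability determinant of the interior permanent-magnet synchronous machine satisfies Δ_y = (((Lδ·i_d + ψ_r)² + Lδ²·i_q²)·ω + Lδ·(Lδ·di_d·i_q − (Lδ·i_d + ψ_r)·di_q))/(L_d·L_q). -/
import Mathlib


open Matrix Real

/-- The PMSM (2×2) inductance matrix 𝔏(θ). -/
noncomputable def Lmat2 (Ld Lq θ : ℝ) : Matrix (Fin 2) (Fin 2) ℝ :=
  !![(Ld + Lq)/2 + (Ld - Lq)/2 * Real.cos (2*θ), (Ld - Lq)/2 * Real.sin (2*θ);
     (Ld - Lq)/2 * Real.sin (2*θ), (Ld + Lq)/2 - (Ld - Lq)/2 * Real.cos (2*θ)]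

/-- The first entrywise θ-derivative 𝔏'(θ). -/
noncomputable def Lmat2' (Ld Lq θ : ℝ) : Matrix (Fin 2) (Fin 2) ℝ :=
  !![-2 * ((Ld - Lq)/2) * Real.sin (2*θ), 2 * ((Ld - Lq)/2) * Real.cos (2*θ);
     2 * ((Ld - Lq)/2) * Real.cos (2*θ), 2 * ((Ld - Lq)/2) * Real.sin (2*θ)]

/-- The second entrywise θ-derivative 𝔏''(θ). -/
noncomputable def Lmat2'' (Ld Lq θ : ℝ) : Matrix (Fin 2) (Fin 2) ℝ :=
  !![-4 * ((Ld - Lq)/2) * Real.cos (2*θ), -4 * ((Ld - Lq)/2) * Real.sin (2*θ);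
     -4 * ((Ld - Lq)/2) * Real.sin (2*θ), 4 * ((Ld - Lq)/2) * Real.cos (2*θ)]

/-- The rotor permanent-magnet flux vector ψ(θ). -/
noncomputable def psiVec (ψr θ : ℝ) : Fin 2 → ℝ := ψr • ![Real.cos θ, Real.sin θ]

/-- Its θ-derivative ψ'(θ). -/
noncomputable def psiVec' (ψr θ : ℝ) : Fin 2 → ℝ := ψr • ![-Real.sin θ, Real.cos θ]

/-- Its second θ-derivative ψ''(θ) = −ψ(θ). -/
noncomputable def psiVec'' (ψr θ : ℝ) : Fin 2 → ℝ := -psiVec ψr θ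

/-- The 2×2 rotation matrix R(θ). -/
noncomputable def Rmat (θ : ℝ) : Matrix (Fin 2) (Fin 2) ℝ :=
  !![Real.cos θ, -Real.sin θ;
     Real.sin θ, Real.cos θ]

/-- Its entrywise θ-derivative R'(θ). -/
noncomputable def Rmat' (θ : ℝ) : Matrix (Fin 2) (Fin 2) ℝ :=
  !![-Real.sin θ, -Real.cos θ;
     Real.cos θ, -Real.sin θ]

/-- The PMSM observability determinant Δ_y, built from
c₁ = −𝔏(θ)⁻¹·(𝔏'(θ)·I + ψ'(θ)) and c₂ = −𝔏(θ)⁻¹·(𝔏'(θ)·dI + ω·(𝔏''(θ)·I + ψ''(θ))),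
where I = R(θ)·(i_d, i_q)ᵀ and dI = R(θ)·(di_d, di_q)ᵀ + ω·R'(θ)·(i_d, i_q)ᵀ. -/
noncomputable def deltaY2 (Ld Lq ψr θ ω i_d i_q di_d di_q : ℝ) : ℝ :=
  let I : Fin 2 → ℝ := Rmat θ *ᵥ ![i_d, i_q]
  let dI : Fin 2 → ℝ := Rmat θ *ᵥ ![di_d, di_q] + ω • (Rmat' θ *ᵥ ![i_d, i_q])
  let c₁ : Fin 2 → ℝ := -((Lmat2 Ld Lq θ)⁻¹ *ᵥ (Lmat2' Ld Lq θ *ᵥ I + psiVec' ψr θ))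
  let c₂ : Fin 2 → ℝ :=
    -((Lmat2 Ld Lq θ)⁻¹ *ᵥ (Lmat2' Ld Lq θ *ᵥ dI + ω • (Lmat2'' Ld Lq θ *ᵥ I + psiVec'' ψr θ)))
  c₁ 0 * c₂ 1 - c₁ 1 * c₂ 0


lemma Lmat2_inv (Ld Lq θ : ℝ) (hLd : Ld ≠ 0) (hLq : Lq ≠ 0) :
    (Lmat2 Ld Lq θ)⁻¹ =
      (Ld*Lq)⁻¹ • !![(Ld + Lq)/2 - (Ld - Lq)/2 * Real.cos (2*θ), -((Ld - Lq)/2 * Real.sin (2*θ));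
        -((Ld - Lq)/2 * Real.sin (2*θ)), (Ld + Lq)/2 + (Ld - Lq)/2 * Real.cos (2*θ)] := by
  apply Matrix.inv_eq_right_inv
  have h := Real.sin_sq_add_cos_sq (2*θ)
  ext i j
  fin_cases i <;> fin_cases j <;>
    simp [Lmat2, Matrix.mul_apply, Fin.sum_univ_two, Matrix.smul_apply] <;>
    field_simp <;>
    first
      | linear_combination (-(Ld-Lq)^2)*h
      | linear_combination (-(Ld-Lq)^2*(2*(Lq*Ld*2)))*h
      | ring

section Aux

variable (Ld Lq ψr θ : ℝ)

private lemma rot_apply (a b : ℝ) :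
    Rmat θ *ᵥ ![a, b] = ![Real.cos θ * a - Real.sin θ * b, Real.sin θ * a + Real.cos θ * b] := by
  funext i; fin_cases i <;>
    simp [Rmat, Matrix.mulVec, dotProduct, Fin.sum_univ_two] <;> ring

private lemma rot_add (a b e f : ℝ) :
    Rmat θ *ᵥ ![a, b] + Rmat θ *ᵥ ![e, f] = Rmat θ *ᵥ ![a + e, b + f] := by
  funext i; fin_cases i <;>
    simp [Rmat, Matrix.mulVec, dotProduct, Fin.sum_univ_two] <;> ring

private lemma rot_smul (k a b : ℝ) :
    k • (Rmat θ *ᵥ ![a, b]) = Rmat θ *ᵥ ![k * a, k * b] := by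
  funext i; fin_cases i <;>
    simp [Rmat, Matrix.mulVec, dotProduct, Fin.sum_univ_two] <;> ring

private lemma rot_neg (a b : ℝ) :
    -(Rmat θ *ᵥ ![a, b]) = Rmat θ *ᵥ ![-a, -b] := by
  funext i; fin_cases i <;>
    simp [Rmat, Matrix.mulVec, dotProduct, Fin.sum_univ_two] <;> ring

private lemma rot'_apply (a b : ℝ) :
    Rmat' θ *ᵥ ![a, b] = Rmat θ *ᵥ ![-b, a] := by
  funext i; fin_cases i <;>
    simp [Rmat, Rmat', Matrix.mulVec, dotProduct, Fin.sum_univ_two] <;> ring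

private lemma psiVec'_rot : psiVec' ψr θ = Rmat θ *ᵥ ![0, ψr] := by
  funext i; fin_cases i <;>
    simp [Rmat, psiVec', Matrix.mulVec, dotProduct, Fin.sum_univ_two] <;> ring

private lemma psiVec''_rot : psiVec'' ψr θ = Rmat θ *ᵥ ![-ψr, 0] := by
  funext i; fin_cases i <;>
    simp [Rmat, psiVec'', psiVec, Matrix.mulVec, dotProduct, Fin.sum_univ_two] <;> ring

private lemma Lmat2'_rot (a b : ℝ) :
    Lmat2' Ld Lq θ *ᵥ (Rmat θ *ᵥ ![a, b]) =
      Rmat θ *ᵥ ![(Ld - Lq) * b, (Ld - Lq) * a] := by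
  have h := Real.sin_sq_add_cos_sq θ
  funext i; fin_cases i <;>
    simp [Rmat, Lmat2', Matrix.mulVec, dotProduct, Fin.sum_univ_two,
      Real.sin_two_mul, Real.cos_two_mul] <;>
    [linear_combination (2*(Ld-Lq)*Real.cos θ*b) * h;
     linear_combination (2*(Ld-Lq)*Real.cos θ*a) * h]

private lemma Lmat2''_rot (a b : ℝ) :
    Lmat2'' Ld Lq θ *ᵥ (Rmat θ *ᵥ ![a, b]) =
      Rmat θ *ᵥ ![-2 * (Ld - Lq) * a, 2 * (Ld - Lq) * b] := by
  have h := Real.sin_sq_add_cos_sq θ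
  funext i; fin_cases i <;>
    simp [Rmat, Lmat2'', Matrix.mulVec, dotProduct, Fin.sum_univ_two,
      Real.sin_two_mul, Real.cos_two_mul] <;>
    [linear_combination (-4*(Ld-Lq)*Real.cos θ*a) * h;
     linear_combination (4*(Ld-Lq)*Real.cos θ*b) * h]

private lemma Lmat2_inv_rot (hLd : Ld ≠ 0) (hLq : Lq ≠ 0) (a b : ℝ) :
    (Lmat2 Ld Lq θ)⁻¹ *ᵥ (Rmat θ *ᵥ ![a, b]) =
      Rmat θ *ᵥ ![Lq * (Ld * Lq)⁻¹ * a, Ld * (Ld * Lq)⁻¹ * b] := by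
  have h := Real.sin_sq_add_cos_sq θ
  rw [Lmat2_inv Ld Lq θ hLd hLq]
  funext i; fin_cases i <;>
    simp [Rmat, Matrix.mulVec, dotProduct, Fin.sum_univ_two, Matrix.smul_apply,
      Real.sin_two_mul, Real.cos_two_mul, smul_eq_mul] <;>
    [linear_combination (-(Ld-Lq)*Real.cos θ*a*(Ld*Lq)⁻¹) * h;
     linear_combination ((Ld-Lq)*Real.cos θ*b*(Ld*Lq)⁻¹) * h]

private lemma rot_det (a b e f : ℝ) :
    (Rmat θ *ᵥ ![a, b]) 0 * (Rmat θ *ᵥ ![e, f]) 1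
      - (Rmat θ *ᵥ ![a, b]) 1 * (Rmat θ *ᵥ ![e, f]) 0 = a * f - b * e := by
  have h := Real.sin_sq_add_cos_sq θ
  simp [Rmat, Matrix.mulVec, dotProduct, Fin.sum_univ_two]
  linear_combination (a*f - b*e) * h

end Aux

/-- The IPMSM observability determinant satisfies
Δ_y = (((Lδ·i_d + ψ_r)² + Lδ²·i_q²)·ω + Lδ·(Lδ·di_d·i_q − (Lδ·i_d + ψ_r)·di_q))/(L_d·L_q). -/
theorem ipmsm_deltaY_formula (Ld Lq : ℝ) (hLd : Ld ≠ 0) (hLq : Lq ≠ 0) (ψr : ℝ)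
    (θ ω i_d i_q di_d di_q : ℝ) :
    deltaY2 Ld Lq ψr θ ω i_d i_q di_d di_q =
      ((( (Ld - Lq) * i_d + ψr) ^ 2 + (Ld - Lq) ^ 2 * i_q ^ 2) * ω +
          (Ld - Lq) * ((Ld - Lq) * di_d * i_q - ((Ld - Lq) * i_d + ψr) * di_q)) /
        (Ld * Lq) := by
  simp only [deltaY2]
  rw [rot'_apply, rot_smul, rot_add, Lmat2'_rot, Lmat2'_rot, Lmat2''_rot, psiVec'_rot,
    psiVec''_rot, rot_add, rot_add, rot_smul, rot_add, Lmat2_inv_rot Ld Lq θ hLd hLq,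
    Lmat2_inv_rot Ld Lq θ hLd hLq, rot_neg, rot_neg, rot_det]
  field_simp
  ring
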